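/- arXiv:1206.3877 — 6 statements merged into one kernel-verified Lean document; each statement's English description precedes it below -/
import Mathlib

section
/- Let π and σ be permutations of {1,…,n} with π ∼ σ (i.e., σ = π + k for some k ∈ [1,n]). Then the linking permutations coincide: Φ(π) = Φ(σ). -/
/-- Cyclic addition of the constant `k` to all values of a permutation of
`{1, …, n}` (identifying positions/values with `Fin n`, 1-based position `i`
corresponding to `i - 1 : Fin n`): `(addConst π k) i = π i + k (mod n)`. -/
def addConst {n : ℕ} (π : Equiv.Perm (Fin n)) (k : ℕ) : Equiv.Perm (Fin n) :=
  π.trans (finRotate n ^ k)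

/-- The linking permutation `Φ(π) = π⁻¹ ∘ (π + 1)`, i.e.
`Φ(π) i = π⁻¹ (π i + 1)` with cyclic value addition (`n + 1 ≡ 1`). -/
def linkPerm {n : ℕ} (π : Equiv.Perm (Fin n)) : Equiv.Perm (Fin n) :=
  (π.trans (finRotate n)).trans π.symm

/-- A permutation has exactly one orbit: iterating it reaches any element from
any element. -/
def OneOrbit {n : ℕ} (φ : Equiv.Perm (Fin n)) : Prop :=
  ∀ x y : Fin n, ∃ m : ℕ, (φ ^ m) x = y

/-- The descent set of a permutation of `{1, …, n}`, as a set of 1-based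
positions: `i ∈ [1, n-1]` is a descent iff `φ(i) > φ(i+1)`.  The 1-based
position `i` corresponds to the element `i - 1 : Fin n`. -/
def desSet {n : ℕ} (φ : Equiv.Perm (Fin n)) : Set ℕ :=
  {i : ℕ | ∃ h : i < n, 1 ≤ i ∧
    φ ⟨i, h⟩ < φ ⟨i - 1, Nat.lt_of_le_of_lt (Nat.sub_le i 1) h⟩}

/-- `π` is the suffix array of the word `w` of length `n`: `π i` is the
(0-based) starting position of the `i`-th smallest suffix of `w` in the
lexicographic order on lists (a proper prefix precedes its extensions). -/
def IsSuffixArray {α : Type*} [LinearOrder α] {n : ℕ} (w : List α)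
    (π : Equiv.Perm (Fin n)) : Prop :=
  w.length = n ∧ ∀ i j : Fin n, i < j → w.drop (π i : ℕ) < w.drop (π j : ℕ)

/-- `π` is the Burrows–Wheeler array of the word `w` of length `n`: `π i` is
the (0-based) starting position of the `i`-th smallest cyclic shift of `w`. -/
def IsBWArray {α : Type*} [LinearOrder α] {n : ℕ} (w : List α)
    (π : Equiv.Perm (Fin n)) : Prop :=
  w.length = n ∧ ∀ i j : Fin n, i < j → w.rotate (π i : ℕ) < w.rotate (π j : ℕ)

/-- A word is primitive iff it is not a proper power of another word:
`w = v^k` implies `k = 1`. -/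
def Primitive {α : Type*} (w : List α) : Prop :=
  ∀ (v : List α) (k : ℕ), w = (List.replicate k v).flatten → k = 1

/-- From `σ ∈ S_n`, the permutation `π' = (n+1) σ(1) ⋯ σ(n) ∈ S_{n+1}`:
position `1` (element `0 : Fin (n+1)`) is sent to the value `n + 1`
(element `Fin.last n`), and position `i + 1` is sent to the value `σ(i)`. -/
def appendMax {n : ℕ} (σ : Equiv.Perm (Fin n)) : Equiv.Perm (Fin (n + 1)) :=
  ((finSuccEquiv n).trans σ.optionCongr).trans (finSuccEquiv' (Fin.last n)).symm

/-- Binomial coefficient with integer arguments, which is `0` when the lower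
index is negative or exceeds the upper index. -/
def intChoose (m r : ℤ) : ℕ :=
  if 0 ≤ r ∧ r ≤ m then m.toNat.choose r.toNat else 0

/-- `π ∈ S_{n+1}` is ascending-to-max.  Values are 1-based: the value
`i ∈ [1, n-1]` corresponds to `x.castSucc` where `x : Fin n` satisfies
`(x : ℕ) + 1 = i` … i.e. `x = i - 1`; the value `i + 1` corresponds to
`x.succ`, and the value `n + 1` corresponds to `Fin.last n`. -/
def AscendingToMax {n : ℕ} (π : Equiv.Perm (Fin (n + 1))) : Prop :=
  ∀ x : Fin n, (x : ℕ) + 1 < n →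
    (π.symm x.castSucc < π.symm (Fin.last n) →
      π.symm x.succ < π.symm (Fin.last n) →
      π.symm x.castSucc < π.symm x.succ) ∧
    (π.symm (Fin.last n) < π.symm x.castSucc →
      π.symm (Fin.last n) < π.symm x.succ →
      π.symm x.succ < π.symm x.castSucc)

/-- `π ∈ S_{n+1}` is non-nesting.  Values are 1-based: the values `i, j ∈ [1, n]`
correspond to `x.castSucc, y.castSucc` with `x, y : Fin n`, and the values
`i + 1, j + 1` to `x.succ, y.succ`. -/
def NonNesting {n : ℕ} (π : Equiv.Perm (Fin (n + 1))) : Prop :=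
  ∀ x y : Fin n, π.symm x.castSucc < π.symm y.castSucc →
    ((π.symm x.castSucc < π.symm x.succ ∧ π.symm y.castSucc < π.symm y.succ) ∨
      (π.symm x.succ < π.symm x.castSucc ∧ π.symm y.succ < π.symm y.castSucc)) →
    π.symm x.succ < π.symm y.succ

theorem conj_mul_left_eq_of_commute {G : Type*} [Group G] {a g : G} (h : Commute g a) (x : G) :
    (g * x)⁻¹ * a * (g * x) = x⁻¹ * a * x :=
  calc (g * x)⁻¹ * a * (g * x) = x⁻¹ * (g⁻¹ * (a * g)) * x := by group
    _ = x⁻¹ * a * x := by rw [h.inv_mul_cancel_assoc]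

theorem linkPerm_eq_conj {n : ℕ} (π : Equiv.Perm (Fin n)) :
    linkPerm π = π⁻¹ * finRotate n * π :=
  rfl

theorem addConst_eq_mul {n : ℕ} (π : Equiv.Perm (Fin n)) (k : ℕ) :
    addConst π k = finRotate n ^ k * π :=
  rfl

theorem linkPerm_addConst {n : ℕ} (π : Equiv.Perm (Fin n)) (k : ℕ) :
    linkPerm (addConst π k) = linkPerm π := by
  rw [linkPerm_eq_conj, linkPerm_eq_conj, addConst_eq_mul,
    conj_mul_left_eq_of_commute ((Commute.refl _).pow_left k)]

/-- If `π ∼ σ`, i.e. `σ = π + k` for some `k ∈ [1, n]`, then the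
linking permutations coincide: `Φ(π) = Φ(σ)`. -/
theorem linkPerm_eq_of_equiv {n : ℕ} (π σ : Equiv.Perm (Fin n))
    (h : ∃ k : ℕ, 1 ≤ k ∧ k ≤ n ∧ σ = addConst π k) :
    linkPerm π = linkPerm σ := by
  obtain ⟨k, -, -, rfl⟩ := h
  exact (linkPerm_addConst π k).symm
end

section
/- Let w ∈ Σ*, ♯ ∉ Σ, and equip Σ ∪ {♯} with an arbitrary linear order. Then the lexicographic order of the cyclic shifts of w♯ coincides with the lexicographic order of the suffixes of w♯; consequently, the BW-array of w♯ equals the suffix array of w♯. -/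
/-!
The cyclic shift of `w♯` at `i` is the suffix of `w♯` at `i` followed by a prefix of `w♯`.
Every suffix of `w♯` ends with the only occurrence of `♯`, so no suffix is a prefix of another:
two cyclic shifts already differ inside their leading suffixes, and compare as those do.
-/

namespace List

variable {α : Type*}

theorem lex_append_append_iff_of_not_prefix {r : α → α → Prop} :
    ∀ {a b : List α} (x y : List α), ¬a <+: b → ¬b <+: a →
      (Lex r (a ++ x) (b ++ y) ↔ Lex r a b)
  | [], _, _, _, hab, _ => absurd nil_prefix hab
  | _ :: _, [], _, _, _, hba => absurd nil_prefix hba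
  | c :: a, d :: b, x, y, hab, hba => by
    simp only [cons_append, cons_lex_cons_iff]
    refine or_congr_right (and_congr_right fun hcd => ?_)
    subst hcd
    exact lex_append_append_iff_of_not_prefix x y
      (fun h => hab (cons_prefix_cons.2 ⟨rfl, h⟩)) (fun h => hba (cons_prefix_cons.2 ⟨rfl, h⟩))

theorem not_drop_prefix_drop_append_singleton {l : List α} {s : α} (hs : s ∉ l) {i j : ℕ}
    (hij : i ≠ j) (hi : i ≤ l.length) (hj : j ≤ l.length) :
    ¬(l ++ [s]).drop i <+: (l ++ [s]).drop j := by
  rw [drop_append_of_le_length hi, drop_append_of_le_length hj]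
  intro h
  rcases prefix_concat_iff.1 h with heq | hpre
  · have := congrArg length heq
    simp only [length_append, length_drop, length_singleton] at this
    omega
  · exact hs (mem_of_mem_drop (hpre.mem (mem_append_right _ (mem_singleton_self s))))

theorem rotate_lt_rotate_iff_drop_lt_drop [LinearOrder α] {l : List α} {s : α} (hs : s ∉ l)
    {i j : ℕ} (hi : i < (l ++ [s]).length) (hj : j < (l ++ [s]).length) :
    (l ++ [s]).rotate i < (l ++ [s]).rotate j ↔ (l ++ [s]).drop i < (l ++ [s]).drop j := by
  rcases eq_or_ne i j with rfl | hij
  · exact iff_of_false (lt_irrefl _) (lt_irrefl _)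
  have hi' : i ≤ l.length := by simpa [Nat.lt_succ_iff] using hi
  have hj' : j ≤ l.length := by simpa [Nat.lt_succ_iff] using hj
  rw [rotate_eq_drop_append_take hi.le, rotate_eq_drop_append_take hj.le]
  exact lex_append_append_iff_of_not_prefix _ _
    (not_drop_prefix_drop_append_singleton hs hij hi' hj')
    (not_drop_prefix_drop_append_singleton hs hij.symm hj' hi')

end List

theorem isBWArray_iff_isSuffixArray_of_rotate_lt_iff_drop_lt {α : Type*} [LinearOrder α]
    {w : List α} {n : ℕ} (π : Equiv.Perm (Fin n))
    (h : ∀ i j : ℕ, i < w.length → j < w.length →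
      (w.rotate i < w.rotate j ↔ w.drop i < w.drop j)) :
    IsBWArray w π ↔ IsSuffixArray w π :=
  and_congr_right fun hlen => forall₂_congr fun i j => imp_congr_right fun _ =>
    h _ _ (hlen ▸ (π i).isLt) (hlen ▸ (π j).isLt)

/-- For `w ∈ Σ*`, `♯ ∉ Σ` and an arbitrary linear order on
`Σ ∪ {♯}`: the lexicographic order of the cyclic shifts of `w♯` coincides with
the lexicographic order of the suffixes of `w♯`; consequently, any `π` is the
BW-array of `w♯` iff it is the suffix array of `w♯`. -/
theorem rotate_lt_iff_drop_lt_of_sentinel {α : Type*} [LinearOrder α]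
    (w : List α) (s : α) (hs : s ∉ w) :
    (∀ i j : ℕ, i < (w ++ [s]).length → j < (w ++ [s]).length →
      ((w ++ [s]).rotate i < (w ++ [s]).rotate j ↔
        (w ++ [s]).drop i < (w ++ [s]).drop j)) ∧
    (∀ (n : ℕ) (π : Equiv.Perm (Fin n)),
      IsBWArray (w ++ [s]) π ↔ IsSuffixArray (w ++ [s]) π) := by
  have hrot := fun i j (hi : i < (w ++ [s]).length) (hj : j < (w ++ [s]).length) =>
    List.rotate_lt_rotate_iff_drop_lt_drop hs hi hj
  exact ⟨hrot, fun _ π => isBWArray_iff_isSuffixArray_of_rotate_lt_iff_drop_lt π hrot⟩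
end

section
/- Let Σ = {a_1 < a_2 < … < a_k} and let r_1,…,r_k ≥ 0 be integers with r_1 + … + r_k = n. A permutation π ∈ S_n is the suffix array of a word w ∈ Σⁿ having exactly r_i occurrences of the letter a_i for each i ∈ [1,k] if and only if, setting π' = (n+1) π(1) … π(n) ∈ S_{n+1} (i.e., π'(1) = n+1 and π'(i+1) = π(i)), one has Des(Φ(π')) ⊆ {1, 1+r_1, 1+r_1+r_2, …, 1+r_1+…+r_{k−1}}. Moreover, in this case π is the suffix array of exactly one such word. -/
/-!
Record a word `w` with suffix array `π` by its letters in rank order, `f i = w[π i]`, so that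
`w = ofFn (f ∘ π⁻¹)`. In `π' = appendMax π` the suffix of rank `0` is the empty one and the suffix
of rank `i + 1` is `f i` followed by the suffix of rank `Φ (i + 1)`, where `Φ = linkPerm π'`.
Hence, by induction on the length of the suffixes, `π` is the suffix array of `w` iff
`i ↦ (f i, Φ (i + 1))` is strictly increasing in the lexicographic order. This forces `f` to be
monotone, and a monotone `f` with letter counts `r` is unique: it puts letter `c` on the ranks
`[R c, R (c + 1))`, where `R` are the partial sums of `r`. Checked on consecutive ranks, strict
monotonicity then says that `Φ` ascends inside each block, i.e. that every descent of `Φ` sits at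
a block boundary.
-/

namespace List

theorem exists_ofFn_eq {α : Type*} {n : ℕ} {l : List α} (hl : l.length = n) :
    ∃ f : Fin n → α, ofFn f = l := by
  subst hl
  exact ⟨l.get, ofFn_get l⟩

theorem count_ofFn {α : Type*} [DecidableEq α] {n : ℕ} (f : Fin n → α) (a : α) :
    (ofFn f).count a = (Finset.univ.filter fun i => f i = a).card := by
  rw [← Multiset.coe_count, ← Fin.univ_val_map, Multiset.count_map, Finset.card_def,
    Finset.filter_val]
  simp only [eq_comm]

end List

section MonotoneCount

variable {α : Type*} [LinearOrder α] {n : ℕ}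

theorem eq_of_monotone_of_count_eq {f g : Fin n → α} (hf : Monotone f) (hg : Monotone g)
    (hfg : ∀ a, (List.ofFn f).count a = (List.ofFn g).count a) : f = g :=
  List.ofFn_injective <| (List.perm_iff_count.2 hfg).eq_of_sortedLE
    hf.sortedLE_ofFn hg.sortedLE_ofFn

theorem exists_monotone_count_eq [Fintype α] {r : α → ℕ} (hr : ∑ a, r a = n) :
    ∃ f : Fin n → α, Monotone f ∧ ∀ a, (List.ofFn f).count a = r a := by
  let s : Multiset α := ∑ a, Multiset.replicate (r a) a
  have hs : (s.sort).length = n := by simp [s, hr]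
  obtain ⟨f, hf⟩ := List.exists_ofFn_eq hs
  refine ⟨f, ?_, fun b => ?_⟩
  · rw [← List.sortedLE_ofFn_iff, hf]
    exact (s.pairwise_sort _).sortedLE
  · rw [hf, ← Multiset.coe_count, Multiset.sort_eq, Multiset.count_sum']
    simp [Multiset.count_replicate]

end MonotoneCount

section Descents

variable {N : ℕ}

theorem Fin.strictMono_iff_lt_of_val_eq_add_one {β : Type*} [Preorder β] {g : Fin N → β} :
    StrictMono g ↔ ∀ i j : Fin N, (j : ℕ) = i + 1 → g i < g j := by
  refine ⟨fun hg i j hij => hg (Fin.lt_def.2 (by omega)), fun h => ?_⟩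
  cases N with
  | zero => exact fun i => i.elim0
  | succ N => exact Fin.strictMono_iff_lt_succ.2 fun i => h _ _ (by simp)

theorem desSet_subset_iff (φ : Equiv.Perm (Fin N)) (B : Set ℕ) :
    desSet φ ⊆ B ↔ ∀ x y : Fin N, (y : ℕ) = x + 1 → φ y < φ x → (y : ℕ) ∈ B := by
  constructor
  · rintro h x y hxy hdes
    refine h ⟨y.isLt, by omega, ?_⟩
    convert hdes
    omega
  · rintro h s ⟨hs, hs1, hdes⟩
    exact h ⟨s - 1, by omega⟩ ⟨s, hs⟩ (by dsimp only; omega) hdes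

end Descents

section Blocks

open Finset

variable {n k : ℕ}

def partialSum (r : Fin k → ℕ) (m : ℕ) : ℕ :=
  ∑ i : Fin k, if (i : ℕ) < m then r i else 0

-- `1 + partialSum r m` is the 1-based position, in `appendMax π`, of the last suffix that is empty
-- or starts with a letter `< m`.
def blockBoundaries (r : Fin k → ℕ) : Set ℕ :=
  {s | ∃ m ≤ k - 1, s = 1 + partialSum r m}

theorem card_filter_lt_eq_partialSum {f : Fin n → Fin k} {r : Fin k → ℕ}
    (hf : ∀ a, (List.ofFn f).count a = r a) (c : ℕ) :
    #{i | (f i : ℕ) < c} = partialSum r c := by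
  rw [card_eq_sum_card_fiberwise (f := f) (t := univ) fun _ _ => mem_univ _, partialSum]
  refine sum_congr rfl fun a _ => ?_
  rw [filter_filter, ← hf, List.count_ofFn]
  split_ifs with ha
  · congr 1
    ext i
    simp only [mem_filter, mem_univ, true_and, and_iff_right_iff_imp]
    exact fun h => h ▸ ha
  · rw [card_eq_zero, filter_eq_empty_iff]
    exact fun i _ ⟨hi, hfi⟩ => ha (hfi ▸ hi)

theorem Monotone.lt_iff_lt_partialSum {f : Fin n → Fin k} (hmono : Monotone f) {r : Fin k → ℕ}
    (hf : ∀ a, (List.ofFn f).count a = r a) (j : Fin n) (c : ℕ) :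
    (f j : ℕ) < c ↔ (j : ℕ) < partialSum r c := by
  rw [← card_filter_lt_eq_partialSum hf]
  exact (Fin.lt_card_filter_univ_iff_apply_of_imp _
    fun _ _ hji h => (Fin.le_def.1 (hmono hji)).trans_lt h).symm

theorem Monotone.lt_iff_mem_blockBoundaries {f : Fin n → Fin k} (hmono : Monotone f)
    {r : Fin k → ℕ} (hf : ∀ a, (List.ofFn f).count a = r a) {i j : Fin n}
    (hij : (j : ℕ) = i + 1) :
    f i < f j ↔ (j : ℕ) + 1 ∈ blockBoundaries r := by
  have hlt := hmono.lt_iff_lt_partialSum hf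
  constructor
  · intro h
    have hi := (hlt i (f j)).1 h
    have hj := (hlt j (f j)).not.1 (lt_irrefl _)
    exact ⟨f j, by omega, by omega⟩
  · rintro ⟨m, -, hm⟩
    have hi := (hlt i m).2 (by omega)
    have hj := (hlt j m).not.2 (by omega)
    exact Fin.lt_def.2 (by omega)

theorem Monotone.strictMono_toLex_iff_desSet_subset {f : Fin n → Fin k}
    (hmono : Monotone f) {r : Fin k → ℕ} (hf : ∀ a, (List.ofFn f).count a = r a)
    (φ : Equiv.Perm (Fin (n + 1))) :
    (StrictMono fun i => toLex (f i, φ i.succ)) ↔ desSet φ ⊆ blockBoundaries r := by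
  rw [Fin.strictMono_iff_lt_of_val_eq_add_one, desSet_subset_iff]
  constructor
  · intro h x y hxy hdes
    induction x using Fin.cases with
    | zero => exact ⟨0, Nat.zero_le _, by simp [hxy, partialSum]⟩
    | succ i =>
      obtain ⟨j, rfl⟩ := Fin.exists_succ_eq.2 (by rintro rfl; simp at hxy : y ≠ 0)
      have hij : (j : ℕ) = i + 1 := by simpa using hxy
      rcases Prod.Lex.toLex_lt_toLex.1 (h i j hij) with hlt | ⟨-, hφ⟩
      · simpa using (hmono.lt_iff_mem_blockBoundaries hf hij).1 hlt
      · exact absurd hdes hφ.asymm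
  · intro h i j hij
    refine Prod.Lex.toLex_lt_toLex.2 (or_iff_not_imp_left.2 fun hlt => ⟨?_, ?_⟩)
    · exact le_antisymm (hmono (Fin.le_def.2 (by omega))) (not_lt.1 hlt)
    · refine lt_of_le_of_ne (not_lt.1 fun hdes => hlt ?_) (φ.injective.ne (Fin.ne_of_val_ne ?_))
      · have hj : (j.succ : ℕ) = i.succ + 1 := by simp [hij]
        exact (hmono.lt_iff_mem_blockBoundaries hf hij).2 (by simpa using h _ _ hj hdes)
      · simp only [Fin.val_succ]
        omega

end Blocks

section SuffixArray

variable {α : Type*} {n : ℕ} (π : Equiv.Perm (Fin n))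

theorem apply_linkPerm {N : ℕ} (σ : Equiv.Perm (Fin N)) (x : Fin N) :
    σ (linkPerm σ x) = finRotate N (σ x) := by
  simp [linkPerm]

@[simp]
theorem appendMax_zero : appendMax π 0 = Fin.last n := by
  simp [appendMax]

@[simp]
theorem appendMax_succ (i : Fin n) : appendMax π i.succ = (π i).castSucc := by
  simp [appendMax]

theorem appendMax_linkPerm_succ (i : Fin n) :
    appendMax π (linkPerm (appendMax π) i.succ) = (π i).succ := by
  rw [apply_linkPerm, appendMax_succ, finRotate_apply, Fin.coeSucc_eq_succ]

theorem drop_appendMax_zero_lt [LinearOrder α] {w : List α} (hw : w.length = n)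
    {y : Fin (n + 1)} (hy : 0 < y) : w.drop (appendMax π 0) < w.drop (appendMax π y) := by
  obtain ⟨j, rfl⟩ := Fin.exists_succ_eq.2 hy.ne'
  rw [appendMax_zero, Fin.val_last, appendMax_succ, Fin.val_castSucc,
    List.drop_of_length_le hw.le, List.drop_eq_getElem_cons (by rw [hw]; exact (π j).isLt)]
  exact List.nil_lt_cons _ _

theorem isSuffixArray_iff_strictMono_drop [LinearOrder α] {w : List α} (hw : w.length = n) :
    IsSuffixArray w π ↔ StrictMono fun x => w.drop (appendMax π x) := by
  refine ⟨fun h x y hxy => ?_, fun h => ⟨hw, fun i j hij => ?_⟩⟩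
  · induction x using Fin.cases with
    | zero => exact drop_appendMax_zero_lt π hw hxy
    | succ i =>
      obtain ⟨j, rfl⟩ := Fin.exists_succ_eq.2 (Fin.succ_pos i |>.trans hxy).ne'
      simpa using h.2 i j (Fin.succ_lt_succ_iff.1 hxy)
  · simpa using h (Fin.succ_lt_succ_iff.2 hij)

theorem drop_ofFn_appendMax_succ (f : Fin n → α) (i : Fin n) :
    (List.ofFn (f ∘ π.symm)).drop (appendMax π i.succ) =
      f i :: (List.ofFn (f ∘ π.symm)).drop (appendMax π (linkPerm (appendMax π) i.succ)) := by
  rw [appendMax_linkPerm_succ, appendMax_succ, Fin.val_castSucc, Fin.val_succ,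
    List.drop_eq_getElem_cons (by simp)]
  simp

theorem isSuffixArray_ofFn_iff [LinearOrder α] (f : Fin n → α) :
    IsSuffixArray (List.ofFn (f ∘ π.symm)) π ↔
      StrictMono fun i => toLex (f i, linkPerm (appendMax π) i.succ) := by
  rw [isSuffixArray_iff_strictMono_drop π List.length_ofFn]
  constructor
  · intro h i j hij
    have hsuc := h (Fin.succ_lt_succ_iff.2 hij)
    dsimp only at hsuc
    rw [drop_ofFn_appendMax_succ, drop_ofFn_appendMax_succ, List.cons_lt_cons_iff] at hsuc
    exact Prod.Lex.toLex_lt_toLex.2 (hsuc.imp_right (And.imp_right h.lt_iff_lt.1))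
  · intro h
    suffices ∀ m x y, n - (appendMax π x : ℕ) = m → x < y →
        (List.ofFn (f ∘ π.symm)).drop (appendMax π x) <
          (List.ofFn (f ∘ π.symm)).drop (appendMax π y) from
      fun x y => this _ x y rfl
    intro m
    induction m using Nat.strong_induction_on with
    | _ m ih =>
    intro x y hm hxy
    induction x using Fin.cases with
    | zero => exact drop_appendMax_zero_lt π List.length_ofFn hxy
    | succ i =>
      obtain ⟨j, rfl⟩ := Fin.exists_succ_eq.2 (Fin.succ_pos i |>.trans hxy).ne'
      rw [drop_ofFn_appendMax_succ, drop_ofFn_appendMax_succ, List.cons_lt_cons_iff]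
      refine (Prod.Lex.toLex_lt_toLex.1 (h (Fin.succ_lt_succ_iff.1 hxy))).imp_right
        (And.imp_right fun hφ => ih _ ?_ _ _ rfl hφ)
      rw [appendMax_linkPerm_succ]
      rw [appendMax_succ, Fin.val_castSucc] at hm
      simp only [Fin.val_succ]
      omega

end SuffixArray

section Words

variable {α : Type*} {n : ℕ} (π : Equiv.Perm (Fin n))

theorem exists_ofFn_comp_symm_eq {w : List α} (hw : w.length = n) :
    ∃ f : Fin n → α, List.ofFn (f ∘ π.symm) = w := by
  obtain ⟨g, rfl⟩ := List.exists_ofFn_eq hw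
  exact ⟨g ∘ π, by simp [Function.comp_assoc]⟩

theorem count_ofFn_comp_symm [DecidableEq α] (f : Fin n → α) (a : α) :
    (List.ofFn (f ∘ π.symm)).count a = (List.ofFn f).count a :=
  (Equiv.Perm.ofFn_comp_perm π.symm f).count_eq a

theorem isSuffixArray_ofFn_iff_desSet_subset {k : ℕ} {f : Fin n → Fin k} {r : Fin k → ℕ}
    (hf : ∀ a, (List.ofFn f).count a = r a) :
    IsSuffixArray (List.ofFn (f ∘ π.symm)) π ↔
      Monotone f ∧ desSet (linkPerm (appendMax π)) ⊆ blockBoundaries r := by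
  rw [isSuffixArray_ofFn_iff]
  constructor
  · intro h
    have hmono : Monotone f := Prod.Lex.monotone_fst_ofLex.comp h.monotone
    exact ⟨hmono, (hmono.strictMono_toLex_iff_desSet_subset hf _).1 h⟩
  · rintro ⟨hmono, hdes⟩
    exact (hmono.strictMono_toLex_iff_desSet_subset hf _).2 hdes

end Words

/-- Over `Σ = {a_1 < … < a_k}` (modelled as `Fin k`) with
`r_1 + … + r_k = n`: a permutation `π ∈ S_n` is the suffix array of a word
`w ∈ Σⁿ` with `r_i` occurrences of `a_i` iff, for
`π' = (n+1) π(1) … π(n)`, one has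
`Des(Φ(π')) ⊆ {1, 1 + r_1, …, 1 + r_1 + ⋯ + r_{k-1}}`; and `π` is the suffix
array of exactly one such word. -/
theorem isSuffixArray_iff_desSet_subset {n k : ℕ} (r : Fin k → ℕ)
    (hr : ∑ i, r i = n) (π : Equiv.Perm (Fin n)) :
    ((∃ w : List (Fin k), w.length = n ∧ (∀ a : Fin k, w.count a = r a) ∧
        IsSuffixArray w π) ↔
      desSet (linkPerm (appendMax π)) ⊆
        {s : ℕ | ∃ m : ℕ, m ≤ k - 1 ∧
          s = 1 + ∑ i : Fin k, if (i : ℕ) < m then r i else 0}) ∧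
    (∀ w₁ w₂ : List (Fin k), w₁.length = n → w₂.length = n →
      (∀ a : Fin k, w₁.count a = r a) → (∀ a : Fin k, w₂.count a = r a) →
      IsSuffixArray w₁ π → IsSuffixArray w₂ π → w₁ = w₂) := by
  change (_ ↔ _ ⊆ blockBoundaries r) ∧ _
  refine ⟨⟨?_, fun hdes => ?_⟩, ?_⟩
  · rintro ⟨w, hw, hcount, hsa⟩
    obtain ⟨f, rfl⟩ := exists_ofFn_comp_symm_eq π hw
    simp only [count_ofFn_comp_symm] at hcount
    exact ((isSuffixArray_ofFn_iff_desSet_subset π hcount).1 hsa).2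
  · obtain ⟨f, hmono, hcount⟩ := exists_monotone_count_eq hr
    refine ⟨List.ofFn (f ∘ π.symm), List.length_ofFn, by simpa only [count_ofFn_comp_symm], ?_⟩
    exact (isSuffixArray_ofFn_iff_desSet_subset π hcount).2 ⟨hmono, hdes⟩
  · intro w₁ w₂ h₁ h₂ hc₁ hc₂ hsa₁ hsa₂
    obtain ⟨f₁, rfl⟩ := exists_ofFn_comp_symm_eq π h₁
    obtain ⟨f₂, rfl⟩ := exists_ofFn_comp_symm_eq π h₂
    simp only [count_ofFn_comp_symm] at hc₁ hc₂
    rw [eq_of_monotone_of_count_eq ((isSuffixArray_ofFn_iff_desSet_subset π hc₁).1 hsa₁).1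
      ((isSuffixArray_ofFn_iff_desSet_subset π hc₂).1 hsa₂).1 fun a => (hc₁ a).trans (hc₂ a).symm]
end

section
/- Let Σ = {a, b} with the three-letter order a < ♯ < b, where ♯ ∉ Σ. A permutation π ∈ S_{n+1} is the suffix array of a word w♯ with w ∈ {a,b}ⁿ (suffixes compared with respect to the order a < ♯ < b) if and only if Des(Φ(π)) ⊆ {π⁻¹(n+1) − 1, π⁻¹(n+1)}. -/
/-! Let `p` be the rank of the sentinel suffix `[s]`. Since `a < s < b`, the suffixes of
`w ++ [s]` ranked below `p` are exactly those beginning with `a`, and those ranked above `p`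
begin with `b`. Deleting the first letter of the suffix of rank `r` gives the suffix of rank
`Φ(π) r`, and deleting a common first letter preserves the order of two suffixes; hence `π` is a
suffix array iff `Φ(π)` is increasing on both sides of `p`, i.e. iff its descents lie at the
boundary positions `p` and `p + 1`. Conversely, such a `π` is realised by the word whose position
`k` carries `a` iff the suffix starting at `k` ranks below `p`. -/

open Equiv Set

theorem apply_linkPerm_s13 {n : ℕ} (π : Perm (Fin (n + 1))) (r : Fin (n + 1)) :
    π (linkPerm π r) = π r + 1 := by
  simp [linkPerm, finRotate_apply]

theorem succ_mem_desSet_iff {n : ℕ} (φ : Perm (Fin (n + 1))) (i : Fin n) :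
    (i : ℕ) + 1 ∈ desSet φ ↔ φ i.succ < φ i.castSucc := by
  simp [desSet, Fin.succ, Fin.castSucc, Fin.castAdd, Fin.castLE]

theorem exists_succ_of_mem_desSet {n : ℕ} {φ : Perm (Fin (n + 1))} {t : ℕ}
    (ht : t ∈ desSet φ) : ∃ i : Fin n, (i : ℕ) + 1 = t := by
  obtain ⟨htn, ht1, -⟩ := ht
  exact ⟨⟨t - 1, by omega⟩, by simp; omega⟩

theorem desSet_subset_pair_iff {n : ℕ} (φ : Perm (Fin (n + 1))) (p : Fin (n + 1)) :
    desSet φ ⊆ {(p : ℕ), (p : ℕ) + 1} ↔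
      StrictMonoOn φ (Iio p) ∧ StrictMonoOn φ (Ioi p) := by
  constructor
  · intro hdes
    have ascent (i : Fin n) (hi : (i : ℕ) + 1 ≠ p ∧ (i : ℕ) + 1 ≠ p + 1) :
        φ i.castSucc < φ i.succ := by
      refine lt_of_le_of_ne (not_lt.1 fun hd => ?_) (φ.injective.ne Fin.castSucc_lt_succ.ne)
      have := hdes ((succ_mem_desSet_iff φ i).2 hd)
      simp only [mem_insert_iff, mem_singleton_iff] at this
      omega
    have step {s : Set (Fin (n + 1))} (hs : s.OrdConnected)
        (hsucc : ∀ i : Fin n, i.castSucc ∈ s → i.succ ∈ s →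
          (i : ℕ) + 1 ≠ p ∧ (i : ℕ) + 1 ≠ p + 1) : StrictMonoOn φ s := by
      refine strictMonoOn_of_lt_succ hs fun a ha hmem hsmem => ?_
      obtain ⟨i, rfl⟩ := Fin.eq_castSucc_of_ne_last (x := a) fun h => ha (h ▸ isMax_top)
      rw [Fin.orderSucc_castSucc] at hsmem ⊢
      exact ascent i (hsucc i hmem hsmem)
    refine ⟨step ordConnected_Iio fun i _ hi => ?_, step ordConnected_Ioi fun i hi _ => ?_⟩
    · rw [mem_Iio, Fin.lt_def, Fin.val_succ] at hi; omega
    · rw [mem_Ioi, Fin.lt_def, Fin.val_castSucc] at hi; omega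
  · rintro ⟨hlo, hhi⟩ t ht
    obtain ⟨i, rfl⟩ := exists_succ_of_mem_desSet ht
    have hd := (succ_mem_desSet_iff φ i).1 ht
    by_contra hnot
    simp only [mem_insert_iff, mem_singleton_iff, not_or] at hnot
    have hi : i.castSucc < i.succ := Fin.castSucc_lt_succ
    rcases lt_or_gt_of_ne (Fin.val_ne_iff.1 hnot.1 : i.succ ≠ p) with h | h
    · exact hd.not_gt (hlo (hi.trans h) h hi)
    · have h' : p < i.castSucc := by rw [Fin.lt_def] at h ⊢; simp at h ⊢; omega
      exact hd.not_gt (hhi h' (h'.trans hi) hi)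

theorem IsSuffixArray.strictMono {β : Type*} [LinearOrder β] {n : ℕ} {u : List β}
    {π : Perm (Fin n)} (hsa : IsSuffixArray u π) : StrictMono fun r => u.drop (π r) :=
  hsa.2

section Suffixes

variable {β : Type*} {n : ℕ} (π : Perm (Fin (n + 1)))

theorem val_lt_of_ne_symm_last {r : Fin (n + 1)} (hr : r ≠ π.symm (Fin.last n)) :
    (π r : ℕ) < n :=
  Fin.val_lt_last fun h => hr (π.eq_symm_apply.2 h)

theorem val_apply_linkPerm {r : Fin (n + 1)} (hr : (π r : ℕ) < n) :
    (π (linkPerm π r) : ℕ) = π r + 1 := by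
  rw [apply_linkPerm_s13, Fin.val_add_one_of_lt (Fin.lt_def.2 (by simpa using hr))]

theorem drop_eq_getElem_cons_drop_linkPerm {u : List β} (hu : u.length = n + 1)
    {r : Fin (n + 1)} (hr : (π r : ℕ) < n) :
    u.drop (π r) = u[(π r : ℕ)] :: u.drop (π (linkPerm π r)) := by
  rw [val_apply_linkPerm π hr]
  exact List.drop_eq_getElem_cons _

def HeadsSplitAtSentinel (a b : β) (u : List β) : Prop :=
  ∀ r, r ≠ π.symm (Fin.last n) →
    u.drop (π r) = (if r < π.symm (Fin.last n) then a else b) :: u.drop (π (linkPerm π r))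

def splitWord (a b : β) : List β :=
  List.ofFn fun k : Fin n => if π.symm k.castSucc < π.symm (Fin.last n) then a else b

theorem length_splitWord (a b : β) : (splitWord π a b).length = n :=
  List.length_ofFn

theorem mem_splitWord {a b c : β} (hc : c ∈ splitWord π a b) : c = a ∨ c = b := by
  obtain ⟨k, rfl⟩ := List.mem_ofFn.1 hc
  split_ifs <;> simp

theorem headsSplitAtSentinel_splitWord (a b s : β) :
    HeadsSplitAtSentinel π a b (splitWord π a b ++ [s]) := by
  intro r hr
  have hrn := val_lt_of_ne_symm_last π hr
  rw [drop_eq_getElem_cons_drop_linkPerm π (by simp [length_splitWord]) hrn]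
  congr 1
  simp [splitWord, List.getElem_append_left, hrn]

section Ordered

variable [LinearOrder β]

theorem headsSplitAtSentinel_of_isSuffixArray {a s b : β} (has : a < s) (hsb : s < b)
    {w : List β} (hw : w.length = n) (hab : ∀ c ∈ w, c = a ∨ c = b)
    (hsa : IsSuffixArray (w ++ [s]) π) : HeadsSplitAtSentinel π a b (w ++ [s]) := by
  intro r hr
  have hrn := val_lt_of_ne_symm_last π hr
  have hu : (w ++ [s]).length = n + 1 := by simp [hw]
  have hcmp := hsa.strictMono.lt_iff_lt (a := r) (b := π.symm (Fin.last n))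
  simp only [apply_symm_apply, Fin.val_last, ← hw, List.drop_left] at hcmp
  rw [drop_eq_getElem_cons_drop_linkPerm π hu hrn] at hcmp ⊢
  congr 1
  rw [List.getElem_append_left (by omega)] at hcmp ⊢
  rcases hab _ (List.getElem_mem _) with h | h <;> rw [h] at hcmp ⊢
  · exact (if_pos (hcmp.1 (List.cons_lt_cons_iff.2 (Or.inl has)))).symm
  · refine (if_neg fun hlt => ?_).symm
    rcases List.cons_lt_cons_iff.1 (hcmp.2 hlt) with h | ⟨h, -⟩
    · exact lt_asymm hsb h
    · exact hsb.ne' h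

theorem strictMonoOn_linkPerm_of_isSuffixArray {a b : β} {u : List β}
    (hsa : IsSuffixArray u π) (hsplit : HeadsSplitAtSentinel π a b u) :
    StrictMonoOn (linkPerm π) (Iio (π.symm (Fin.last n))) ∧
      StrictMonoOn (linkPerm π) (Ioi (π.symm (Fin.last n))) := by
  have same_side {i j} (hi : i ≠ π.symm (Fin.last n)) (hj : j ≠ π.symm (Fin.last n))
      (hside : i < π.symm (Fin.last n) ↔ j < π.symm (Fin.last n)) (hij : i < j) :
      linkPerm π i < linkPerm π j := by
    have h := hsa.strictMono hij
    simp only [hsplit i hi, hsplit j hj, if_congr hside rfl rfl, List.cons_lt_cons_iff,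
      lt_irrefl, false_or, true_and] at h
    exact hsa.strictMono.lt_iff_lt.1 h
  exact ⟨fun i hi j hj => same_side hi.ne hj.ne (iff_of_true hi hj),
    fun i hi j hj => same_side hi.ne' hj.ne' (iff_of_false hi.not_gt hj.not_gt)⟩

theorem isSuffixArray_of_headsSplitAtSentinel {a s b : β} (has : a < s) (hsb : s < b)
    {u : List β} (hu : u.length = n + 1) (hlast : u.drop n = [s])
    (hsplit : HeadsSplitAtSentinel π a b u)
    (hlo : StrictMonoOn (linkPerm π) (Iio (π.symm (Fin.last n))))
    (hhi : StrictMonoOn (linkPerm π) (Ioi (π.symm (Fin.last n)))) :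
    IsSuffixArray u π := by
  refine ⟨hu, fun i j hij => ?_⟩
  set p := π.symm (Fin.last n) with hp
  have hsent : u.drop (π p) = [s] := by simp [hp, hlast]
  -- induction on the length of the suffix of rank `i`: equal first letters defer to the tails
  induction hk : n - (π i : ℕ) using Nat.strong_induction_on generalizing i j with
  | _ k ih =>
  rcases eq_or_ne i p with rfl | hi
  · rw [hsent, hsplit j hij.ne', if_neg (lt_asymm hij)]
    exact List.cons_lt_cons_iff.2 (Or.inl hsb)
  rcases eq_or_ne j p with rfl | hj
  · rw [hsent, hsplit i hi, if_pos hij]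
    exact List.cons_lt_cons_iff.2 (Or.inl has)
  have hshorter : n - (π (linkPerm π i) : ℕ) < k := by
    have hin := val_lt_of_ne_symm_last π hi
    rw [val_apply_linkPerm π hin]
    omega
  rw [hsplit i hi, hsplit j hj]
  by_cases hip : i < p <;> by_cases hjp : j < p
  · rw [if_pos hip, if_pos hjp]
    exact List.cons_lt_cons_iff.2 (Or.inr ⟨rfl, ih _ hshorter _ _ (hlo hip hjp hij) rfl⟩)
  · rw [if_pos hip, if_neg hjp]
    exact List.cons_lt_cons_iff.2 (Or.inl (has.trans hsb))
  · exact absurd (hjp.trans_le (not_lt.1 hip)) (lt_asymm hij)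
  · have hpi : p < i := lt_of_le_of_ne (not_lt.1 hip) (Ne.symm hi)
    rw [if_neg hip, if_neg hjp]
    exact List.cons_lt_cons_iff.2
      (Or.inr ⟨rfl, ih _ hshorter _ _ (hhi hpi (hpi.trans hij) hij) rfl⟩)

end Ordered

end Suffixes

/-- `π.symm (Fin.last n)` is the 0-based rank of the sentinel suffix, i.e. `π⁻¹(n+1) - 1`. -/
theorem isSuffixArray_midSentinel_iff_desSet {β : Type*} [LinearOrder β]
    (a s b : β) (has : a < s) (hsb : s < b) {n : ℕ}
    (π : Equiv.Perm (Fin (n + 1))) :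
    (∃ w : List β, w.length = n ∧ (∀ c ∈ w, c = a ∨ c = b) ∧
        IsSuffixArray (w ++ [s]) π) ↔
      desSet (linkPerm π) ⊆
        {((π.symm (Fin.last n) : Fin (n + 1)) : ℕ),
          ((π.symm (Fin.last n) : Fin (n + 1)) : ℕ) + 1} := by
  rw [desSet_subset_pair_iff]
  constructor
  · rintro ⟨w, hw, hab, hsa⟩
    exact strictMonoOn_linkPerm_of_isSuffixArray π hsa
      (headsSplitAtSentinel_of_isSuffixArray π has hsb hw hab hsa)
  · rintro ⟨hlo, hhi⟩
    refine ⟨splitWord π a b, length_splitWord π a b, fun c => mem_splitWord π, ?_⟩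
    exact isSuffixArray_of_headsSplitAtSentinel π has hsb (by simp [length_splitWord])
      (List.drop_left' (length_splitWord π a b)) (headsSplitAtSentinel_splitWord π a b s) hlo hhi
end

section
/- Let π ∈ S_{n+1} and φ = Φ(π). Then Des(φ) ⊆ {π⁻¹(n+1) − 1, π⁻¹(n+1)} if and only if π is both ascending-to-max and non-nesting. -/
/-!
Write `m = π⁻¹(n+1)` and `φ = Φ(π)`. Off `m`, `φ` sends the position of a value `v` to the
position of `v + 1`, so `m` is its only possible fixed point; ascending-to-max says that `φ`
moves a point towards `m` whenever it keeps it on the same side of `m`, and non-nesting says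
that `φ` is increasing on pairs of points off `m` that it moves in the same direction.

`Des(φ) ⊆ {m, m + 1}` means that `φ` is increasing on each side of `m`. An increasing map
without fixed points on `Iio m` satisfies `p < φ p` there (a minimal `p` with `φ p < p` would
produce the smaller one `φ p`), and dually `φ p < p` on `Ioi m`; this gives both properties.
Conversely, for `p < q` on the same side of `m`, non-nesting handles equal directions, and the
configuration `p < φ p`, `φ q < q` is ruled out by ascending-to-max at `q` (left of `m`) or at
`p` (right of `m`).
-/

open Set Order

section Pivot

variable {α : Type*} [LinearOrder α] {f : α → α} {m : α}

theorem lt_apply_of_strictMonoOn_Iio [WellFoundedLT α] (hf : StrictMonoOn f (Iio m))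
    (hfix : ∀ p < m, f p ≠ p) {p : α} (hp : p < m) : p < f p := by
  induction p using WellFoundedLT.induction with
  | _ p ih =>
    refine (hfix p hp).symm.lt_of_le (not_lt.1 fun hlt => ?_)
    exact (hf (hlt.trans hp) hp hlt).asymm (ih _ hlt (hlt.trans hp))

theorem apply_lt_of_strictMonoOn_Ioi [WellFoundedGT α] (hf : StrictMonoOn f (Ioi m))
    (hfix : ∀ p > m, f p ≠ p) {p : α} (hp : m < p) : f p < p :=
  lt_apply_of_strictMonoOn_Iio (α := αᵒᵈ) hf.dual hfix hp

theorem strictMonoOn_Iio_and_Ioi_iff_lt_succ [SuccOrder α] [IsSuccArchimedean α] :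
    StrictMonoOn f (Iio m) ∧ StrictMonoOn f (Ioi m) ↔
      ∀ p, ¬IsMax p → p ≠ m → succ p ≠ m → f p < f (succ p) := by
  constructor
  · rintro ⟨hL, hR⟩ p hp hpm hsm
    have hps : p < succ p := lt_succ_of_not_isMax hp
    rcases hpm.lt_or_gt with hlt | hgt
    · have hs : succ p < m := (succ_le_of_lt hlt).lt_of_ne hsm
      exact hL hlt hs hps
    · exact hR hgt (hgt.trans hps) hps
  · intro h
    exact ⟨strictMonoOn_of_lt_succ ordConnected_Iio fun p hp hpm hsm => h p hp hpm.ne hsm.ne,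
      strictMonoOn_of_lt_succ ordConnected_Ioi fun p hp hpm hsm => h p hp hpm.ne' hsm.ne'⟩

theorem strictMonoOn_of_nonNesting {s : Set α} (hfix : ∀ p ∈ s, f p ≠ p)
    (hnest : ∀ p ∈ s, ∀ q ∈ s, p < q → (p < f p ∧ q < f q ∨ f p < p ∧ f q < q) → f p < f q)
    (hcross : ∀ p ∈ s, ∀ q ∈ s, p < q → p < f p → ¬f q < q) :
    StrictMonoOn f s := by
  intro p hp q hq hpq
  rcases (hfix p hp).lt_or_gt with hp' | hp' <;> rcases (hfix q hq).lt_or_gt with hq' | hq'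
  · exact hnest p hp q hq hpq (.inr ⟨hp', hq'⟩)
  · exact hp'.trans (hpq.trans hq')
  · exact absurd hq' (hcross p hp q hq hpq hp')
  · exact hnest p hp q hq hpq (.inl ⟨hp', hq'⟩)

theorem strictMonoOn_Iio_and_Ioi_iff [WellFoundedLT α] [WellFoundedGT α]
    (hfix : ∀ p ≠ m, f p ≠ p) :
    StrictMonoOn f (Iio m) ∧ StrictMonoOn f (Ioi m) ↔
      (∀ p, (p < m → f p < m → p < f p) ∧ (m < p → m < f p → f p < p)) ∧
      ∀ p ≠ m, ∀ q ≠ m, p < q →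
        (p < f p ∧ q < f q ∨ f p < p ∧ f q < q) → f p < f q := by
  constructor
  · rintro ⟨hL, hR⟩
    have hup {p} (hp : p < m) : p < f p :=
      lt_apply_of_strictMonoOn_Iio hL (fun p hp => hfix p hp.ne) hp
    have hdown {p} (hp : m < p) : f p < p :=
      apply_lt_of_strictMonoOn_Ioi hR (fun p hp => hfix p hp.ne') hp
    refine ⟨fun p => ⟨fun hp _ => hup hp, fun hp _ => hdown hp⟩, ?_⟩
    intro p hpm q hqm hpq hdir
    rcases hpm.lt_or_gt with hp | hp <;> rcases hqm.lt_or_gt with hq | hq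
    · exact hL hp hq hpq
    · rcases hdir with ⟨-, hq'⟩ | ⟨hp', -⟩
      · exact absurd hq' (hdown hq).asymm
      · exact absurd hp' (hup hp).asymm
    · exact absurd (hpq.trans hq) hp.asymm
    · exact hR hp hq hpq
  · rintro ⟨hasc, hnest⟩
    refine ⟨strictMonoOn_of_nonNesting (fun p hp => hfix p (ne_of_lt hp))
        (fun p hp q hq => hnest p (ne_of_lt hp) q (ne_of_lt hq)) ?_,
      strictMonoOn_of_nonNesting (fun p hp => hfix p (ne_of_gt hp))
        (fun p hp q hq => hnest p (ne_of_gt hp) q (ne_of_gt hq)) ?_⟩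
    · intro p _ q hq _ _ hq'
      exact (hasc q).1 hq (hq'.trans hq) |>.asymm hq'
    · intro p hp q _ _ hp' _
      exact (hasc p).2 hp (hp.trans hp') |>.asymm hp'

end Pivot

theorem mem_desSet_iff {n : ℕ} (φ : Equiv.Perm (Fin (n + 1))) (i : ℕ) :
    i ∈ desSet φ ↔ ∃ x : Fin n, (x.succ : ℕ) = i ∧ φ x.succ < φ x.castSucc := by
  constructor
  · rintro ⟨hi, hi1, hlt⟩
    obtain ⟨x, rfl⟩ : ∃ x : Fin n, (x.succ : ℕ) = i :=
      ⟨⟨i - 1, by omega⟩, by simp only [Fin.val_succ]; omega⟩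
    exact ⟨x, rfl, hlt⟩
  · rintro ⟨x, rfl, hlt⟩
    exact ⟨x.succ.isLt, by simp, hlt⟩

theorem desSet_subset_pair_iff_s14 {n : ℕ} (φ : Equiv.Perm (Fin (n + 1))) (m : Fin (n + 1)) :
    desSet φ ⊆ {(m : ℕ), (m : ℕ) + 1} ↔
      ∀ p, ¬IsMax p → p ≠ m → succ p ≠ m → φ p < φ (succ p) := by
  have hmax (p : Fin (n + 1)) : ¬IsMax p ↔ ∃ x : Fin n, x.castSucc = p := by
    simp [isMax_iff_eq_top, Fin.top_eq_last, Fin.exists_castSucc_eq]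
  simp only [Set.subset_def, mem_desSet_iff, forall_exists_index, and_imp, hmax,
    Set.mem_insert_iff, Set.mem_singleton_iff]
  constructor
  · rintro h _ x rfl hxm hsm
    rw [Fin.orderSucc_castSucc] at hsm ⊢
    refine lt_of_not_ge fun hle => ?_
    rcases h _ x rfl (hle.lt_of_ne (φ.injective.ne x.castSucc_lt_succ.ne')) with e | e
    · exact hsm (Fin.ext e)
    · exact hxm (Fin.ext (by simpa using e))
  · rintro h _ x rfl hlt
    by_contra hne
    push Not at hne
    refine (h _ x rfl (fun e => hne.2 ?_) ?_).asymm (by simpa using hlt)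
    · simp [← e]
    · rw [Fin.orderSucc_castSucc]
      exact fun e => hne.1 (by rw [e])

section LinkPerm

variable {n : ℕ} (π : Equiv.Perm (Fin (n + 1)))

theorem linkPerm_symm_castSucc (x : Fin n) :
    linkPerm π (π.symm x.castSucc) = π.symm x.succ := by
  simp [linkPerm]

theorem forall_ne_symm_last {P : Fin (n + 1) → Prop} :
    (∀ p ≠ π.symm (Fin.last n), P p) ↔ ∀ x : Fin n, P (π.symm x.castSucc) := by
  rw [← π.symm.forall_congr_right, Fin.forall_fin_succ']
  simp [Fin.castSucc_ne_last]

theorem linkPerm_apply_ne_self : ∀ p ≠ π.symm (Fin.last n), linkPerm π p ≠ p := by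
  rw [forall_ne_symm_last]
  intro x
  rw [linkPerm_symm_castSucc, ne_eq, π.symm.apply_eq_iff_eq]
  exact x.castSucc_lt_succ.ne'

theorem ascendingToMax_iff :
    AscendingToMax π ↔ ∀ p,
      (p < π.symm (Fin.last n) → linkPerm π p < π.symm (Fin.last n) → p < linkPerm π p) ∧
      (π.symm (Fin.last n) < p → π.symm (Fin.last n) < linkPerm π p → linkPerm π p < p) := by
  rw [← π.symm.forall_congr_right, Fin.forall_fin_succ']
  simp only [linkPerm_symm_castSucc, lt_irrefl, false_imp_iff, and_self, and_true]
  refine forall_congr' fun x => ⟨fun h => ?_, fun h _ => h⟩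
  by_cases hx : (x : ℕ) + 1 < n
  · exact h hx
  -- for `x + 1 = n` the point is sent to `π⁻¹(n+1)` itself, and both implications are vacuous
  · have : x.succ = Fin.last n := Fin.ext (by simp only [Fin.val_succ, Fin.val_last]; omega)
    simp [this]

theorem nonNesting_iff :
    NonNesting π ↔ ∀ p ≠ π.symm (Fin.last n), ∀ q ≠ π.symm (Fin.last n), p < q →
      (p < linkPerm π p ∧ q < linkPerm π q ∨ linkPerm π p < p ∧ linkPerm π q < q) →
      linkPerm π p < linkPerm π q := by
  simp only [forall_ne_symm_last, linkPerm_symm_castSucc]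
  rfl

end LinkPerm

/-- For `π ∈ S_{n+1}` and `φ = Φ(π)`:
`Des(φ) ⊆ {π⁻¹(n+1) - 1, π⁻¹(n+1)}` iff `π` is both ascending-to-max and
non-nesting. -/
theorem desSet_subset_iff_ascendingToMax_nonNesting {n : ℕ}
    (π : Equiv.Perm (Fin (n + 1))) :
    desSet (linkPerm π) ⊆
        {((π.symm (Fin.last n) : Fin (n + 1)) : ℕ),
          ((π.symm (Fin.last n) : Fin (n + 1)) : ℕ) + 1} ↔
      (AscendingToMax π ∧ NonNesting π) := by
  rw [desSet_subset_pair_iff_s14, ← strictMonoOn_Iio_and_Ioi_iff_lt_succ,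
    strictMonoOn_Iio_and_Ioi_iff (linkPerm_apply_ne_self π), ascendingToMax_iff, nonNesting_iff]
end

section
/- Let Σ = {a, b} with the three-letter order a < ♯ < b, where ♯ ∉ Σ. A permutation π ∈ S_{n+1} is the suffix array of a word w♯ with w ∈ {a,b}ⁿ (suffixes compared with respect to the order a < ♯ < b) if and only if π is both ascending-to-max and non-nesting. -/
/-!
With `a < ♯ < b`, a suffix starting with `a` is smaller than the suffix `♯`, and prepending `a`
to a word over `{a, b}` followed by `♯` makes it smaller; dually for `b`.  So in the suffix array
of `w♯` the positions ranked below the sentinel, the ascents of `π⁻¹`, and the `a`-positions of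
`w` all coincide: this is ascending-to-max.  Two suffixes with the same first letter compare as
their tails do, which is non-nesting.  Conversely, given such a `π`, let `w` carry `a` exactly at
the positions ranked below the sentinel; that `π` sorts the suffixes of `w♯` then follows by
reverse induction on the starting position of the smaller suffix.
-/

namespace List

variable {α : Type*} [LinearOrder α] {a s b : α}

theorem cons_append_singleton_lt (has : a < s) :
    ∀ {u : List α}, (∀ c ∈ u, a ≤ c) → a :: (u ++ [s]) < u ++ [s]
  | [], _ => cons_lt_cons_iff.mpr (Or.inl has)
  | c :: u, hu => by
    rcases (hu c mem_cons_self).lt_or_eq with hac | hac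
    · exact cons_lt_cons_iff.mpr (Or.inl hac)
    · rw [← hac]
      exact cons_lt_cons_iff.mpr
        (Or.inr ⟨rfl, cons_append_singleton_lt has fun c hc => hu c (mem_cons_of_mem _ hc)⟩)

theorem append_singleton_lt_cons (hsb : s < b) :
    ∀ {u : List α}, (∀ c ∈ u, c ≤ b) → u ++ [s] < b :: (u ++ [s])
  | [], _ => cons_lt_cons_iff.mpr (Or.inl hsb)
  | c :: u, hu => by
    rcases (hu c mem_cons_self).lt_or_eq with hcb | hcb
    · exact cons_lt_cons_iff.mpr (Or.inl hcb)
    · rw [hcb]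
      exact cons_lt_cons_iff.mpr
        (Or.inr ⟨rfl, append_singleton_lt_cons hsb fun c hc => hu c (mem_cons_of_mem _ hc)⟩)

end List

theorem IsSuffixArray.symm_lt_symm_iff {α : Type*} [LinearOrder α] {n : ℕ} {w : List α}
    {π : Equiv.Perm (Fin n)} (h : IsSuffixArray w π) (p q : Fin n) :
    π.symm p < π.symm q ↔ w.drop p < w.drop q := by
  have hmono : StrictMono fun i => w.drop (π i) := fun i j hij => h.2 i j hij
  simpa using (hmono.lt_iff_lt (a := π.symm p) (b := π.symm q)).symm

section SentinelWord

variable {β : Type*} {n : ℕ} (f : Fin n → β) (s : β)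

theorem drop_last_ofFn_append_singleton :
    (List.ofFn f ++ [s]).drop (Fin.last n) = [s] := by
  simp

theorem drop_castSucc_ofFn_append_singleton (x : Fin n) :
    (List.ofFn f ++ [s]).drop x.castSucc = f x :: (List.ofFn f ++ [s]).drop x.succ := by
  rw [List.drop_eq_getElem_cons (by simp)]
  simp [List.getElem_append_left]

theorem drop_succ_ofFn_append_singleton (x : Fin n) :
    (List.ofFn f ++ [s]).drop x.succ = (List.ofFn f).drop x.succ ++ [s] :=
  List.drop_append_of_le_length (by simp)

end SentinelWord

namespace Equiv.Perm

variable {n : ℕ} (π : Equiv.Perm (Fin (n + 1)))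

theorem symm_succ_lt_symm_castSucc_iff (x : Fin n) :
    π.symm x.succ < π.symm x.castSucc ↔ ¬ π.symm x.castSucc < π.symm x.succ := by
  refine ⟨lt_asymm, fun h => lt_of_le_of_ne (not_lt.mp h) ?_⟩
  exact π.symm.injective.ne Fin.castSucc_lt_succ.ne'

/-- Unlike the definition, this also covers `x = n - 1`, where `x.succ` is the maximum. -/
theorem ascendingToMax_iff :
    AscendingToMax π ↔ ∀ x : Fin n,
      (π.symm x.castSucc < π.symm (Fin.last n) ↔ π.symm x.castSucc < π.symm x.succ) := by
  have hne : ∀ x : Fin n, π.symm x.castSucc ≠ π.symm (Fin.last n) :=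
    fun x => π.symm.injective.ne (Fin.castSucc_ne_last x)
  constructor
  · intro hA x
    by_cases hx : (x : ℕ) + 1 < n
    · have hsucc : π.symm x.succ ≠ π.symm (Fin.last n) :=
        π.symm.injective.ne fun h => hx.ne (congrArg Fin.val h)
      constructor
      · intro h
        rcases hsucc.lt_or_gt with h' | h'
        · exact (hA x hx).1 h h'
        · exact h.trans h'
      · intro h
        by_contra h'
        have hlast := ((hne x).lt_or_gt.resolve_left h')
        exact lt_asymm h ((hA x hx).2 hlast (hlast.trans h))
    · have : x.succ = Fin.last n := Fin.ext (by simp; omega)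
      rw [this]
  · intro H x _
    refine ⟨fun h _ => (H x).mp h, fun h _ => ?_⟩
    exact (π.symm_succ_lt_symm_castSucc_iff x).mpr
      fun h' => lt_asymm h ((H x).mpr h')

end Equiv.Perm

theorem NonNesting.symm_succ_lt_symm_succ {n : ℕ} {π : Equiv.Perm (Fin (n + 1))}
    (hA : AscendingToMax π) (hN : NonNesting π) {x y : Fin n}
    (hxy : π.symm x.castSucc < π.symm y.castSucc)
    (hsame : π.symm x.castSucc < π.symm (Fin.last n) ↔ π.symm y.castSucc < π.symm (Fin.last n)) :
    π.symm x.succ < π.symm y.succ := by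
  rw [π.ascendingToMax_iff.mp hA x, π.ascendingToMax_iff.mp hA y] at hsame
  refine hN x y hxy ?_
  by_cases hx : π.symm x.castSucc < π.symm x.succ
  · exact Or.inl ⟨hx, hsame.mp hx⟩
  · exact Or.inr ⟨(π.symm_succ_lt_symm_castSucc_iff x).mpr hx,
      (π.symm_succ_lt_symm_castSucc_iff y).mpr (mt hsame.mpr hx)⟩

def Equiv.Perm.toWord {β : Type*} {n : ℕ} (a b : β) (π : Equiv.Perm (Fin (n + 1))) (x : Fin n) :
    β :=
  if π.symm x.castSucc < π.symm (Fin.last n) then a else b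

section SuffixArray

variable {β : Type*} [LinearOrder β] {a s b : β} {n : ℕ}

theorem IsSuffixArray.symm_castSucc_lt_symm_last_iff (has : a < s) (hsb : s < b)
    {f : Fin n → β} (hf : ∀ x, f x = a ∨ f x = b) {π : Equiv.Perm (Fin (n + 1))}
    (hsa : IsSuffixArray (List.ofFn f ++ [s]) π) (x : Fin n) :
    π.symm x.castSucc < π.symm (Fin.last n) ↔ f x = a := by
  rw [hsa.symm_lt_symm_iff, drop_castSucc_ofFn_append_singleton, drop_last_ofFn_append_singleton]
  rcases hf x with h | h <;> rw [h]
  · simp [List.cons_lt_cons_iff, has]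
  · simp [List.cons_lt_cons_iff, hsb.not_gt, hsb.ne', (has.trans hsb).ne']

theorem IsSuffixArray.symm_castSucc_lt_symm_succ_iff (has : a < s) (hsb : s < b)
    {f : Fin n → β} (hf : ∀ x, f x = a ∨ f x = b) {π : Equiv.Perm (Fin (n + 1))}
    (hsa : IsSuffixArray (List.ofFn f ++ [s]) π) (x : Fin n) :
    π.symm x.castSucc < π.symm x.succ ↔ f x = a := by
  rw [hsa.symm_lt_symm_iff, drop_castSucc_ofFn_append_singleton,
    drop_succ_ofFn_append_singleton]
  have hletters : ∀ c ∈ (List.ofFn f).drop x.succ, c = a ∨ c = b := fun c hc => by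
    obtain ⟨y, rfl⟩ := List.mem_ofFn.mp (List.mem_of_mem_drop hc)
    exact hf y
  have hab : a < b := has.trans hsb
  rcases hf x with h | h <;> rw [h]
  · refine iff_of_true (List.cons_append_singleton_lt has fun c hc => ?_) rfl
    rcases hletters c hc with rfl | rfl
    exacts [le_rfl, hab.le]
  · refine iff_of_false (lt_asymm (List.append_singleton_lt_cons hsb fun c hc => ?_)) hab.ne'
    rcases hletters c hc with rfl | rfl
    exacts [hab.le, le_rfl]

theorem IsSuffixArray.ascendingToMax (has : a < s) (hsb : s < b)
    {f : Fin n → β} (hf : ∀ x, f x = a ∨ f x = b) {π : Equiv.Perm (Fin (n + 1))}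
    (hsa : IsSuffixArray (List.ofFn f ++ [s]) π) : AscendingToMax π :=
  π.ascendingToMax_iff.mpr fun x =>
    (hsa.symm_castSucc_lt_symm_last_iff has hsb hf x).trans
      (hsa.symm_castSucc_lt_symm_succ_iff has hsb hf x).symm

theorem IsSuffixArray.nonNesting (has : a < s) (hsb : s < b)
    {f : Fin n → β} (hf : ∀ x, f x = a ∨ f x = b) {π : Equiv.Perm (Fin (n + 1))}
    (hsa : IsSuffixArray (List.ofFn f ++ [s]) π) : NonNesting π := by
  have hasc := hsa.symm_castSucc_lt_symm_succ_iff has hsb hf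
  intro x y hxy hcase
  have hfxy : f x = f y := by
    rcases hcase with ⟨hx, hy⟩ | ⟨hx, hy⟩
    · rw [(hasc x).mp hx, (hasc y).mp hy]
    · rw [π.symm_succ_lt_symm_castSucc_iff, hasc] at hx hy
      rw [(hf x).resolve_left hx, (hf y).resolve_left hy]
  rw [hsa.symm_lt_symm_iff, drop_castSucc_ofFn_append_singleton,
    drop_castSucc_ofFn_append_singleton, hfxy, List.cons_lt_cons_iff] at hxy
  rw [hsa.symm_lt_symm_iff]
  exact (hxy.resolve_left (lt_irrefl _)).2

theorem isSuffixArray_toWord (has : a < s) (hsb : s < b) {π : Equiv.Perm (Fin (n + 1))}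
    (hA : AscendingToMax π) (hN : NonNesting π) :
    IsSuffixArray (List.ofFn (π.toWord a b) ++ [s]) π := by
  set W := List.ofFn (π.toWord a b) ++ [s]
  have hW := drop_castSucc_ofFn_append_singleton (π.toWord a b) s
  suffices key : ∀ p q, π.symm p < π.symm q → W.drop p < W.drop q from
    ⟨by simp [W], fun i j hij => by simpa using key (π i) (π j) (by simpa using hij)⟩
  intro p
  induction p using Fin.reverseInduction with
  | last =>
    intro q hq
    cases q using Fin.lastCases with
    | last => exact absurd hq (lt_irrefl _)
    | cast y =>
      rw [drop_last_ofFn_append_singleton, hW, Equiv.Perm.toWord, if_neg (lt_asymm hq)]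
      exact List.cons_lt_cons_iff.mpr (Or.inl hsb)
  | cast x ih =>
    intro q hq
    cases q using Fin.lastCases with
    | last =>
      rw [hW, drop_last_ofFn_append_singleton, Equiv.Perm.toWord, if_pos hq]
      exact List.cons_lt_cons_iff.mpr (Or.inl has)
    | cast y =>
      rw [hW, hW]
      by_cases hsame : π.symm x.castSucc < π.symm (Fin.last n) ↔
          π.symm y.castSucc < π.symm (Fin.last n)
      · have hlet : π.toWord a b x = π.toWord a b y := by simp only [Equiv.Perm.toWord, hsame]
        rw [hlet]
        exact List.cons_lt_cons_iff.mpr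
          (Or.inr ⟨rfl, ih _ (hN.symm_succ_lt_symm_succ hA hq hsame)⟩)
      · have hx : π.symm x.castSucc < π.symm (Fin.last n) := by
          by_contra hx
          exact hsame (iff_of_false hx fun hy => hx (hq.trans hy))
        have hy : ¬ π.symm y.castSucc < π.symm (Fin.last n) := fun hy =>
          hsame (iff_of_true hx hy)
        simp only [Equiv.Perm.toWord, if_pos hx, if_neg hy]
        exact List.cons_lt_cons_iff.mpr (Or.inl (has.trans hsb))

end SuffixArray

/-- (He et al.) Let `Σ = {a, b}` with sentinel order
`a < ♯ < b`.  A permutation `π ∈ S_{n+1}` is the suffix array of a word `w♯`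
with `w ∈ {a, b}ⁿ` iff `π` is both ascending-to-max and non-nesting. -/
theorem isSuffixArray_midSentinel_iff_ascendingToMax_nonNesting {β : Type*}
    [LinearOrder β] (a s b : β) (has : a < s) (hsb : s < b) {n : ℕ}
    (π : Equiv.Perm (Fin (n + 1))) :
    (∃ w : List β, w.length = n ∧ (∀ c ∈ w, c = a ∨ c = b) ∧
        IsSuffixArray (w ++ [s]) π) ↔
      (AscendingToMax π ∧ NonNesting π) := by
  constructor
  · rintro ⟨w, hn, hw, hsa⟩
    obtain ⟨f, rfl⟩ : ∃ f : Fin n → β, List.ofFn f = w :=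
      ⟨fun x => w[(x : ℕ)], List.ext_getElem (by simp [hn]) (by simp)⟩
    have hf : ∀ x, f x = a ∨ f x = b := fun x => hw _ (List.mem_ofFn.mpr ⟨x, rfl⟩)
    exact ⟨hsa.ascendingToMax has hsb hf, hsa.nonNesting has hsb hf⟩
  · rintro ⟨hA, hN⟩
    refine ⟨List.ofFn (π.toWord a b), List.length_ofFn, fun c hc => ?_,
      isSuffixArray_toWord has hsb hA hN⟩
    obtain ⟨x, rfl⟩ := List.mem_ofFn.mp hc
    unfold Equiv.Perm.toWord
    split_ifs <;> simp
end
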